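/- For any (n+1)-regular properly edge-colored graph Γ with colors Δ_n = {0,…,n} and any cyclic permutation ε = (ε_0,…,ε_n) of Δ_n, the quantity χ_ε(Γ) = ∑_{i∈ℤ_{n+1}} g_{ε_i ε_{i+1}} + (1-n)·|V(Γ)|/2 is an even integer when Γ is bipartite and each bicolored subgraph Γ_{{i,j}} is a disjoint union of even cycles; here g_{ij} denotes the number of connected components of the subgraph Γ_{{i,j}} spanned by edges colored i or j. -/

import Mathlib

/-- An `(n+1)`-regular properly edge-colored graph, encoded by its colored
adjacency involutions: for each color `i ∈ Δ_n = {0,…,n}` every vertex has a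
unique neighbor along an edge of color `i`. -/
structure IGraph (n : ℕ) where
  V : Type
  fin : Fintype V
  a : Fin (n + 1) → V → V
  invol : ∀ i, Function.Involutive (a i)
  nofix : ∀ i v, a i v ≠ v

/-- The number `g_{ij}` of connected components of the bicolored subgraph
`Γ_{{i,j}}` spanned by the edges colored `i` or `j`. -/
noncomputable def IGraph.bic {n : ℕ} (Γ : IGraph n) (i j : Fin (n + 1)) : ℕ :=
  Nat.card (Quot (fun u w : Γ.V => Γ.a i u = w ∨ Γ.a j u = w))

/-!
Split `V` into black and white vertices. For colours `i, j` the map `a_i ∘ a_j` permutes the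
black vertices, and its cycles correspond to the components of `Γ_{ij}`. A permutation of `b`
points with `c` cycles has sign `(-1)^(b - c)`, and `sign (a_i a_j) = sign (a_0 a_i) · sign (a_0 a_j)`,
so along the cyclic sequence `ε` the signs cancel: `∑ g_{ε_i ε_{i+1}} ≡ (n + 1) b (mod 2)`.
As `|V| = 2b`, `χ_ε = ∑ g_{ε_i ε_{i+1}} + (1 - n) b ≡ 2b ≡ 0 (mod 2)`.
-/

namespace Equiv.Perm

theorem quot_mk_eq_of_sameCycle {α : Type*} {σ : Perm α} {x y : α} (h : SameCycle σ x y) :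
    Quot.mk (fun u w => σ u = w) x = Quot.mk _ y := by
  obtain ⟨k, rfl⟩ := h
  induction k using Int.induction_on with
  | zero => rfl
  | succ k ih => rw [ih, add_comm, zpow_one_add, mul_apply]; exact Quot.sound rfl
  | pred k ih =>
    refine ih.trans (Quot.sound ?_).symm
    rw [← mul_apply, ← zpow_one_add, add_sub_cancel]

variable {α : Type*} [Fintype α] [DecidableEq α]

def cycleOrFixedPoint (σ : Perm α) (x : α) : σ.cycleFactorsFinset ⊕ Function.fixedPoints σ :=
  if hx : σ x = x then .inr ⟨x, hx⟩
  else .inl ⟨σ.cycleOf x, cycleOf_mem_cycleFactorsFinset_iff.2 (mem_support.2 hx)⟩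

theorem cycleOrFixedPoint_eq_iff {σ : Perm α} {x y : α} :
    σ.cycleOrFixedPoint x = σ.cycleOrFixedPoint y ↔ SameCycle σ x y := by
  unfold cycleOrFixedPoint
  by_cases hx : σ x = x <;> by_cases hy : σ y = y <;>
    simp only [hx, hy, dite_true, dite_false, reduceCtorEq, Sum.inl.injEq, Sum.inr.injEq,
      Subtype.ext_iff, false_iff]
  · exact ⟨fun h => h ▸ SameCycle.refl _ _, fun h => h.eq_of_left hx⟩
  · exact fun h => hy (h.apply_eq_self_iff.1 hx)
  · exact fun h => hx (h.apply_eq_self_iff.2 hy)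
  · refine ⟨fun h => ?_, SameCycle.cycleOf_eq⟩
    exact (mem_support_cycleOf_iff' hx).1
      (h ▸ mem_support_cycleOf_iff.2 ⟨.refl _ _, mem_support.2 hy⟩)

theorem cycleOrFixedPoint_surjective (σ : Perm α) : Function.Surjective σ.cycleOrFixedPoint := by
  rintro (⟨c, hc⟩ | ⟨x, hx⟩)
  · obtain ⟨x, hxc⟩ := (mem_cycleFactorsFinset_iff.1 hc).1.nonempty_support
    have hx : σ x ≠ x := mem_support.1 (mem_cycleFactorsFinset_support_le hc hxc)
    refine ⟨x, ?_⟩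
    simp only [cycleOrFixedPoint, hx, dite_false, cycle_is_cycleOf hxc hc]
  · exact ⟨x, by simp only [cycleOrFixedPoint, show σ x = x from hx, dite_true]⟩

theorem card_quot_eq_card_cycleType_add (σ : Perm α) :
    Nat.card (Quot fun u w => σ u = w) =
      Multiset.card σ.cycleType + (Fintype.card α - σ.cycleType.sum) := by
  let f : Quot (fun u w => σ u = w) → σ.cycleFactorsFinset ⊕ Function.fixedPoints σ :=
    Quot.lift σ.cycleOrFixedPoint <| by
      rintro x _ rfl; exact cycleOrFixedPoint_eq_iff.2 (sameCycle_apply_right.2 (.refl _ _))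
  have hf : Function.Bijective f := by
    refine ⟨?_, fun b => ?_⟩
    · rintro ⟨x⟩ ⟨y⟩ h
      exact quot_mk_eq_of_sameCycle (cycleOrFixedPoint_eq_iff.1 h)
    · obtain ⟨x, rfl⟩ := σ.cycleOrFixedPoint_surjective b
      exact ⟨Quot.mk _ x, rfl⟩
  rw [Nat.card_eq_of_bijective f hf, Nat.card_sum,
    Nat.card_eq_fintype_card (α := Function.fixedPoints σ), card_fixedPoints]
  simp [cycleType_def]

theorem neg_one_pow_card_quot (σ : Perm α) :
    (-1 : ℤˣ) ^ Nat.card (Quot fun u w => σ u = w) = (-1) ^ Fintype.card α * sign σ := by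
  obtain ⟨m, hm⟩ := Nat.exists_eq_add_of_le σ.sum_cycleType_le
  rw [card_quot_eq_card_cycleType_add, sign_of_cycleType, hm, Nat.add_sub_cancel_left, ← pow_add,
    show σ.cycleType.sum + m + (σ.cycleType.sum + Multiset.card σ.cycleType) =
      Multiset.card σ.cycleType + m + 2 * σ.cycleType.sum by ring,
    pow_add _ (_ + m), (even_two_mul _).neg_one_pow, mul_one]

end Equiv.Perm

def Quot.equivOfMaps {α β : Type*} {r : α → α → Prop} {s : β → β → Prop}
    (F : α → β) (G : β → α)
    (hF : ∀ x y, r x y → Quot.mk s (F x) = Quot.mk s (F y))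
    (hG : ∀ x y, s x y → Quot.mk r (G x) = Quot.mk r (G y))
    (hGF : ∀ x, Quot.mk r (G (F x)) = Quot.mk r x)
    (hFG : ∀ y, Quot.mk s (F (G y)) = Quot.mk s y) : Quot r ≃ Quot s where
  toFun := Quot.lift (fun x => Quot.mk s (F x)) hF
  invFun := Quot.lift (fun y => Quot.mk r (G y)) hG
  left_inv := Quot.ind hGF
  right_inv := Quot.ind hFG

section Bipartite

variable {V : Type*} {s : V → Bool} {f g : V → V}

def bipartiteRetraction (hfs : ∀ v, s (f v) ≠ s v) (v : V) : {v // s v} :=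
  if h : s v then ⟨v, h⟩ else ⟨f v, by simpa [h] using hfs v⟩

theorem card_quot_or_eq_card_quot_comp (hf : Function.Involutive f) (hg : Function.Involutive g)
    (hfs : ∀ v, s (f v) ≠ s v) (hgs : ∀ v, s (g v) ≠ s v)
    (σ : Equiv.Perm {v // s v}) (hσ : ∀ v, (σ v : V) = f (g v)) :
    Nat.card (Quot fun u w => f u = w ∨ g u = w) =
      Nat.card (Quot fun u w : {v // s v} => σ u = w) := by
  let F := bipartiteRetraction hfs
  have hF_true : ∀ v, s v = true → (F v : V) = v := fun v h => by
    simp [F, bipartiteRetraction, h]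
  have hF_false : ∀ v, s v = false → (F v : V) = f v := fun v h => by
    simp [F, bipartiteRetraction, h]
  have hf_mk : ∀ v, Quot.mk (fun u w => f u = w ∨ g u = w) v = Quot.mk _ (f v) :=
    fun v => Quot.sound (Or.inl rfl)
  have hg_mk : ∀ v, Quot.mk (fun u w => f u = w ∨ g u = w) v = Quot.mk _ (g v) :=
    fun v => Quot.sound (Or.inr rfl)
  refine Nat.card_congr (Quot.equivOfMaps F Subtype.val ?_ ?_ ?_ ?_)
  · rintro u w (rfl | rfl) <;> cases hu : s u
    · congr 1; ext; rw [hF_false u hu, hF_true (f u) (by simpa [hu] using hfs u)]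
    · congr 1; ext; rw [hF_true u hu, hF_false (f u) (by simpa [hu] using hfs u), hf u]
    · symm; apply Quot.sound; apply Subtype.ext
      rw [hσ, hF_true (g u) (by simpa [hu] using hgs u), hg u, hF_false u hu]
    · apply Quot.sound; apply Subtype.ext
      rw [hσ, hF_true u hu, hF_false (g u) (by simpa [hu] using hgs u)]
  · rintro u w rfl
    rw [hσ, hg_mk, hf_mk]
  · intro v
    cases hv : s v
    · rw [hF_false v hv, ← hf_mk]
    · rw [hF_true v hv]
  · intro v
    rw [Subtype.ext (hF_true v v.2)]

theorem card_eq_two_mul_card_of_involutive [Finite V] (hf : Function.Involutive f)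
    (hfs : ∀ v, s (f v) ≠ s v) : Nat.card V = 2 * Nat.card {v // s v} := by
  let e : {v // ¬s v} ≃ {v // s v} :=
    { toFun v := ⟨f v, by simpa [v.2] using hfs v⟩
      invFun v := ⟨f v, by simpa [v.2] using hfs v⟩
      left_inv v := Subtype.ext (hf v)
      right_inv v := Subtype.ext (hf v) }
  rw [← Nat.card_congr (Equiv.sumCompl fun v => s v = true), Nat.card_sum, Nat.card_congr e,
    two_mul]

end Bipartite

theorem Bool.eq_of_ne_of_ne {a b c : Bool} (hab : a ≠ b) (hbc : b ≠ c) : a = c := by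
  revert a b c; decide

namespace IGraph

variable {n : ℕ} (Γ : IGraph n) {s : Γ.V → Bool}

instance : Fintype Γ.V := Γ.fin

section

variable (hs : ∀ i v, s (Γ.a i v) ≠ s v)

def bicPerm (i j : Fin (n + 1)) : Equiv.Perm {v // s v} where
  toFun v := ⟨Γ.a i (Γ.a j v), (Bool.eq_of_ne_of_ne (hs i _) (hs j _)).trans v.2⟩
  invFun v := ⟨Γ.a j (Γ.a i v), (Bool.eq_of_ne_of_ne (hs j _) (hs i _)).trans v.2⟩
  left_inv v := Subtype.ext <| by simp only [Γ.invol i _, Γ.invol j _]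
  right_inv v := Subtype.ext <| by simp only [Γ.invol i _, Γ.invol j _]

theorem bic_eq_card_quot_bicPerm (i j : Fin (n + 1)) :
    Γ.bic i j = Nat.card (Quot fun u w => Γ.bicPerm hs i j u = w) :=
  card_quot_or_eq_card_quot_comp (Γ.invol i) (Γ.invol j) (hs i) (hs j) _ fun _ => rfl

theorem bicPerm_eq_mul (i j k : Fin (n + 1)) :
    Γ.bicPerm hs i j = Γ.bicPerm hs i k * Γ.bicPerm hs k j :=
  Equiv.ext fun v => Subtype.ext <| by simp [bicPerm, Γ.invol k _]

theorem bicPerm_inv (i j : Fin (n + 1)) : (Γ.bicPerm hs i j)⁻¹ = Γ.bicPerm hs j i := rfl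

theorem sign_bicPerm [DecidableEq Γ.V] (i j k : Fin (n + 1)) :
    Equiv.Perm.sign (Γ.bicPerm hs i j) =
      Equiv.Perm.sign (Γ.bicPerm hs k i) * Equiv.Perm.sign (Γ.bicPerm hs k j) := by
  rw [Γ.bicPerm_eq_mul hs i j k, map_mul, ← Γ.bicPerm_inv hs k i, Equiv.Perm.sign_inv]

end

theorem even_sum_bic_add (hs : ∀ i v, s (Γ.a i v) ≠ s v) (ε : Equiv.Perm (Fin (n + 1))) :
    Even (∑ i, Γ.bic (ε i) (ε (i + 1)) + (n + 1) * Nat.card {v // s v}) := by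
  classical
  rw [Nat.card_eq_fintype_card]
  set b := Fintype.card {v // s v}
  let sg : Fin (n + 1) → ℤˣ := fun c => Equiv.Perm.sign (Γ.bicPerm hs 0 c)
  have hbic : ∀ i j, (-1 : ℤˣ) ^ Γ.bic i j = (-1) ^ b * (sg i * sg j) := fun i j => by
    rw [Γ.bic_eq_card_quot_bicPerm hs, Equiv.Perm.neg_one_pow_card_quot,
      Γ.sign_bicPerm hs i j 0]
  have hshift : ∏ i, sg (ε (i + 1)) = ∏ i, sg (ε i) :=
    Equiv.prod_comp (Equiv.addRight 1) fun i => sg (ε i)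
  have hsum : (-1 : ℤˣ) ^ ∑ i, Γ.bic (ε i) (ε (i + 1)) = (-1) ^ ((n + 1) * b) := by
    rw [← Finset.prod_pow_eq_pow_sum, Finset.prod_congr rfl fun i _ => hbic _ _,
      Finset.prod_mul_distrib, Finset.prod_mul_distrib, hshift, Int.units_mul_self,
      Finset.prod_const, Finset.card_univ, Fintype.card_fin, mul_one, ← pow_mul, mul_comm]
  rw [← neg_one_pow_eq_one_iff_even (R := ℤˣ) (by decide), pow_add, hsum, ← pow_add, ← two_mul,
    pow_mul, Int.units_sq, one_pow]

end IGraph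

theorem chi_even_general (n : ℕ) (Γ : IGraph n) (ε : Equiv.Perm (Fin (n + 1)))
    (hbip : ∃ sign : Γ.V → Bool, ∀ (i : Fin (n + 1)) (v : Γ.V),
      sign (Γ.a i v) ≠ sign v) :
    ∃ k : ℤ,
      (∑ i : Fin (n + 1), (Γ.bic (ε i) (ε (i + 1)) : ℚ))
        + (1 - (n : ℚ)) * (Nat.card Γ.V : ℚ) / 2 = 2 * (k : ℚ) := by
  obtain ⟨s, hs⟩ := hbip
  obtain ⟨t, ht⟩ := Γ.even_sum_bic_add hs ε
  refine ⟨t - n * Nat.card {v // s v}, ?_⟩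
  rw [card_eq_two_mul_card_of_involutive (Γ.invol 0) (hs 0)]
  have htq := congrArg (Nat.cast : ℕ → ℚ) ht
  push_cast at htq ⊢
  linarith

/-- For any `(n+1)`-regular properly edge-colored graph `Γ` and any cyclic
permutation `ε` of `Δ_n`, the quantity
`χ_ε(Γ) = ∑_{i ∈ ℤ_{n+1}} g_{ε_i ε_{i+1}} + (1-n)·|V(Γ)|/2`
is an even integer when `Γ` is bipartite and each bicolored subgraph
`Γ_{{i,j}}` is a disjoint union of even cycles. -/
theorem chi_even (n : ℕ) (Γ : IGraph n) (ε : Equiv.Perm (Fin (n + 1)))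
    (hbip : ∃ sign : Γ.V → Bool, ∀ (i : Fin (n + 1)) (v : Γ.V),
      sign (Γ.a i v) ≠ sign v)
    (heven : ∀ i j : Fin (n + 1), i ≠ j → ∀ v : Γ.V,
      Even (Nat.card {w : Γ.V //
        Relation.ReflTransGen (fun x y => Γ.a i x = y ∨ Γ.a j x = y) v w})) :
    ∃ k : ℤ,
      (∑ i : Fin (n + 1), (Γ.bic (ε i) (ε (i + 1)) : ℚ))
        + (1 - (n : ℚ)) * (Nat.card Γ.V : ℚ) / 2 = 2 * (k : ℚ) :=
  chi_even_general n Γ ε hbip
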